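/- arXiv:1902.04924 — 2 statements merged into one kernel-verified Lean document; each statement's English description precedes it below -/
import Mathlib

section
/- Let H be a real Hilbert space and J = J₁ + J₂ with J₁, J₂ : H → ℝ Fréchet differentiable, J₁ convex and J₂ concave. Let τ > 0 and suppose u^{n+1} ∈ H satisfies the convex splitting scheme u^{n+1} = uⁿ - τ ∇J₁(u^{n+1}) - τ ∇J₂(uⁿ). Then J(u^{n+1}) + (1/(2τ))‖u^{n+1} - uⁿ‖² ≤ J(uⁿ). -/
/-!
Convexity of `J₁` at `u⁺` and concavity of `J₂` at `uⁿ` bound `J u⁺ - J uⁿ` from above by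
`⟪∇J₁ u⁺ + ∇J₂ uⁿ, u⁺ - uⁿ⟫`, and the scheme says exactly that `∇J₁ u⁺ + ∇J₂ uⁿ = -τ⁻¹ (u⁺ - uⁿ)`.
Hence the energy drops by at least `τ⁻¹ ‖u⁺ - uⁿ‖²`, twice the claimed amount, whatever `τ > 0`.
-/

open scoped Gradient RealInnerProductSpace

section FirstOrder

variable {E : Type*} [NormedAddCommGroup E] [NormedSpace ℝ E] {f : E → ℝ} {f' : E →L[ℝ] ℝ}
  {s : Set E} {x y : E}

theorem ConvexOn.apply_sub_le_sub_of_hasFDerivAt (hf : ConvexOn ℝ s f) (hx : x ∈ s)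
    (hy : y ∈ s) (hf' : HasFDerivAt f f' x) : f' (y - x) ≤ f y - f x := by
  let ℓ : ℝ →ᵃ[ℝ] E := AffineMap.lineMap x y
  have hderiv : HasDerivAt (f ∘ ℓ) (f' (y - x)) 0 :=
    hf'.comp_hasDerivAt_of_eq 0 AffineMap.hasDerivAt_lineMap (by simp [ℓ])
  have hslope := (hf.comp_affineMap ℓ).le_slope_of_hasDerivAt (x := 0) (y := 1)
    (by simpa [ℓ] using hx) (by simpa [ℓ] using hy) one_pos hderiv
  simpa [slope_def_field, ℓ] using hslope

theorem ConcaveOn.sub_le_apply_sub_of_hasFDerivAt (hf : ConcaveOn ℝ s f) (hx : x ∈ s)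
    (hy : y ∈ s) (hf' : HasFDerivAt f f' x) : f y - f x ≤ f' (y - x) := by
  have h := hf.neg.apply_sub_le_sub_of_hasFDerivAt hx hy hf'.neg
  simp only [Pi.neg_apply, neg_apply] at h
  linarith

end FirstOrder

section Gradient

variable {H : Type*} [NormedAddCommGroup H] [InnerProductSpace ℝ H] [CompleteSpace H]
  {f : H → ℝ} {s : Set H} {x y : H}

theorem ConvexOn.sub_le_inner_gradient (hf : ConvexOn ℝ s f) (hx : x ∈ s) (hy : y ∈ s)
    (hd : DifferentiableAt ℝ f x) : f x - f y ≤ ⟪∇ f x, x - y⟫ := by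
  have h := hf.apply_sub_le_sub_of_hasFDerivAt hx hy hd.hasFDerivAt
  rw [inner_gradient_left, ← neg_sub y x, map_neg]
  linarith

theorem ConcaveOn.sub_le_inner_gradient (hf : ConcaveOn ℝ s f) (hx : x ∈ s) (hy : y ∈ s)
    (hd : DifferentiableAt ℝ f x) : f y - f x ≤ ⟪∇ f x, y - x⟫ := by
  rw [inner_gradient_left]
  exact hf.sub_le_apply_sub_of_hasFDerivAt hx hy hd.hasFDerivAt

end Gradient

/-- Unconditional energy stability of the convex splitting scheme: if `J = J₁ + J₂` with `J₁`
convex and `J₂` concave, both differentiable, and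
`u⁺ = uⁿ - τ ∇J₁(u⁺) - τ ∇J₂(uⁿ)` with `τ > 0`, then
`J(u⁺) + (1/(2τ))‖u⁺ - uⁿ‖² ≤ J(uⁿ)`. -/
theorem convex_splitting_energy_stable
    {H : Type*} [NormedAddCommGroup H] [InnerProductSpace ℝ H] [CompleteSpace H]
    (J J₁ J₂ : H → ℝ) (hsum : ∀ u, J u = J₁ u + J₂ u)
    (hJ₁ : Differentiable ℝ J₁) (hJ₂ : Differentiable ℝ J₂)
    (hconv : ConvexOn ℝ Set.univ J₁) (hconc : ConcaveOn ℝ Set.univ J₂)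
    (τ : ℝ) (hτ : 0 < τ) (un un1 : H)
    (hscheme : un1 = un - τ • gradient J₁ un1 - τ • gradient J₂ un) :
    J un1 + (1 / (2 * τ)) * ‖un1 - un‖ ^ 2 ≤ J un := by
  have h₁ := hconv.sub_le_inner_gradient trivial trivial (hJ₁ un1) (y := un)
  have h₂ := hconc.sub_le_inner_gradient trivial trivial (hJ₂ un) (y := un1)
  have hstep : ∇ J₁ un1 + ∇ J₂ un = -τ⁻¹ • (un1 - un) := by
    have hτstep : τ • (∇ J₁ un1 + ∇ J₂ un) = -(un1 - un) := by
      conv_rhs => rw [hscheme]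
      module
    rw [neg_smul, ← smul_neg, ← hτstep, inv_smul_smul₀ hτ.ne']
  have hinner : ⟪∇ J₁ un1, un1 - un⟫ + ⟪∇ J₂ un, un1 - un⟫ = -τ⁻¹ * ‖un1 - un‖ ^ 2 := by
    rw [← inner_add_left, hstep, real_inner_smul_left, real_inner_self_eq_norm_sq]
  have hcoef : 1 / (2 * τ) ≤ τ⁻¹ := by
    rw [one_div, mul_inv]
    linarith [inv_pos.2 hτ]
  calc J un1 + 1 / (2 * τ) * ‖un1 - un‖ ^ 2
      ≤ J un1 + τ⁻¹ * ‖un1 - un‖ ^ 2 := by gcongr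
    _ ≤ J un := by rw [hsum, hsum]; linarith
end

section
/- Let H be a real Hilbert space, A : H → H a bounded self-adjoint linear operator with ⟨Av, v⟩ ≥ 0 for all v, N : H → H a map, and J : H → ℝ differentiable with ∇J(u) = Au + N(u). Suppose there exists L ≥ 0 such that J(v) ≤ J(w) + ⟨∇J(w), v-w⟩ + (L/2)‖v-w‖² for all v,w. If u^{n+1} solves the linearly-implicit stabilized scheme (I + τA)u^{n+1} = uⁿ - τ N(uⁿ) with τ > 0 satisfying τ ≤ 2/L (or L = 0), then J(u^{n+1}) ≤ J(uⁿ). -/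
/-!
Writing `d = u⁺ - uⁿ`, the scheme reads `d = -τ (∇J(uⁿ) + A d)`, so
`⟪∇J(uⁿ), d⟫ = -‖d‖²/τ - ⟪A d, d⟫ ≤ -‖d‖²/τ` by positivity of `A`. The descent lemma then gives
`J(u⁺) ≤ J(uⁿ) - (1/τ - L/2) ‖d‖²`, and `L τ ≤ 2` makes the coefficient nonnegative.
-/

open RealInnerProductSpace

theorem sub_eq_neg_smul_of_add_smul_eq {𝕜 E : Type*} [Field 𝕜] [AddCommGroup E] [Module 𝕜 E]
    (A : E →ₗ[𝕜] E) (N : E → E) {τ : 𝕜} {u u' : E} (h : u' + τ • A u' = u - τ • N u) :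
    u' - u = -τ • (A u + N u + A (u' - u)) := by
  rw [map_sub]
  linear_combination (norm := module) h

theorem inner_eq_of_eq_neg_smul {E : Type*} [NormedAddCommGroup E] [InnerProductSpace ℝ E]
    (A : E → E) {g d : E} {τ : ℝ} (hτ : τ ≠ 0) (hd : d = -τ • (g + A d)) :
    ⟪g, d⟫ = -τ⁻¹ * ‖d‖ ^ 2 - ⟪A d, d⟫ := by
  have hg : g = -τ⁻¹ • d - A d := by
    have : τ⁻¹ • d = -(g + A d) := by
      conv_lhs => rw [hd]
      rw [smul_smul, mul_neg, inv_mul_cancel₀ hτ, neg_one_smul]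
    rw [neg_smul, this]
    abel
  rw [hg, inner_sub_left, real_inner_smul_left, real_inner_self_eq_norm_sq]

theorem mul_le_two_of_eq_zero_or_le_two_div {L τ : ℝ} (hτ : 0 < τ) (h : L = 0 ∨ τ ≤ 2 / L) :
    L * τ ≤ 2 := by
  rcases h with rfl | h
  · simp
  rcases le_or_gt L 0 with hL | hL
  · nlinarith
  · rw [mul_comm]
    exact (le_div_iff₀ hL).mp h

theorem le_of_le_quadratic_model {E : Type*} [NormedAddCommGroup E] [InnerProductSpace ℝ E]
    {J : E → ℝ} {g v w : E} {L τ : ℝ} (hτ : 0 < τ) (hLτ : L * τ ≤ 2)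
    (hmodel : J v ≤ J w + ⟪g, v - w⟫ + L / 2 * ‖v - w‖ ^ 2)
    (hslope : ⟪g, v - w⟫ ≤ -τ⁻¹ * ‖v - w‖ ^ 2) :
    J v ≤ J w := by
  have hcoef : 0 ≤ τ⁻¹ - L / 2 := by
    rw [show τ⁻¹ - L / 2 = (2 - L * τ) / (2 * τ) by field_simp]
    exact div_nonneg (by linarith) (by positivity)
  nlinarith [mul_nonneg hcoef (sq_nonneg ‖v - w‖)]

theorem linearly_implicit_stabilized_energy_stable_general
    {H : Type*} [NormedAddCommGroup H] [InnerProductSpace ℝ H] [CompleteSpace H]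
    (A : H →L[ℝ] H) (hApos : ∀ v : H, 0 ≤ ⟪A v, v⟫)
    (N : H → H) (J : H → ℝ)
    (hgrad : ∀ u : H, gradient J u = A u + N u)
    (L : ℝ)
    (hsmooth : ∀ v w : H,
      J v ≤ J w + ⟪gradient J w, v - w⟫ + (L / 2) * ‖v - w‖ ^ 2)
    (τ : ℝ) (hτ : 0 < τ) (hτL : L = 0 ∨ τ ≤ 2 / L)
    (un un1 : H) (hscheme : un1 + τ • A un1 = un - τ • N un) :
    J un1 ≤ J un := by
  have hstep : un1 - un = -τ • (gradient J un + A (un1 - un)) := by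
    rw [hgrad]
    exact sub_eq_neg_smul_of_add_smul_eq (A : H →ₗ[ℝ] H) N hscheme
  have hslope := inner_eq_of_eq_neg_smul A hτ.ne' hstep
  refine le_of_le_quadratic_model hτ (mul_le_two_of_eq_zero_or_le_two_div hτ hτL)
    (hsmooth un1 un) ?_
  linarith [hApos (un1 - un)]

/-- Energy stability of the linearly-implicit stabilized scheme
`(I + τA)u⁺ = uⁿ - τ N(uⁿ)` for the gradient flow of an `L`-smooth energy `J` with
`∇J(u) = Au + N(u)`, `A` bounded self-adjoint positive semidefinite, provided
`τ ≤ 2/L` (or `L = 0`). -/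
theorem linearly_implicit_stabilized_energy_stable
    {H : Type*} [NormedAddCommGroup H] [InnerProductSpace ℝ H] [CompleteSpace H]
    (A : H →L[ℝ] H) (hA : IsSelfAdjoint A) (hApos : ∀ v : H, 0 ≤ ⟪A v, v⟫)
    (N : H → H) (J : H → ℝ) (hJ : Differentiable ℝ J)
    (hgrad : ∀ u : H, gradient J u = A u + N u)
    (L : ℝ) (hL : 0 ≤ L)
    (hsmooth : ∀ v w : H,
      J v ≤ J w + ⟪gradient J w, v - w⟫ + (L / 2) * ‖v - w‖ ^ 2)
    (τ : ℝ) (hτ : 0 < τ) (hτL : L = 0 ∨ τ ≤ 2 / L)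
    (un un1 : H) (hscheme : un1 + τ • A un1 = un - τ • N un) :
    J un1 ≤ J un :=
  linearly_implicit_stabilized_energy_stable_general A hApos N J hgrad L hsmooth τ hτ hτL un un1
    hscheme
end
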